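/- arXiv:2505.21217 — 2 statements merged into one kernel-verified Lean document; each statement's English description precedes it below -/
import Mathlib

section
/- For every Borel set E ⊆ ℝ^d, ucod E = sup{ s ≥ 0 : there exist μ ∈ 𝒫(E) and a strictly increasing sequence of positive integers n_k such that μ(C) ≤ 2^{-n_k s} for every dyadic cube C of side 2^{-n_k} and every k }. -/
open MeasureTheory Metric Filter Set Topology

/-- The topological support of a measure: points all of whose neighbourhoods
have positive measure. -/
def msupport {X : Type*} [TopologicalSpace X] [MeasurableSpace X]
    (μ : Measure X) : Set X :=
  {x | ∀ U : Set X, IsOpen U → x ∈ U → μ U ≠ 0}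

/-- The collection of Borel probability measures whose support is contained in `E`. -/
def probOn {X : Type*} [TopologicalSpace X] [MeasurableSpace X]
    (E : Set X) : Set (Measure X) :=
  {μ | IsProbabilityMeasure μ ∧ msupport μ ⊆ E}

/-- The correlation integral `∫ μ(B(x,r)) dμ(x)` (as a real number). -/
noncomputable def corrInt {X : Type*} [MetricSpace X] [MeasurableSpace X]
    (μ : Measure X) (r : ℝ) : ℝ :=
  (∫⁻ x, μ (closedBall x r) ∂μ).toReal

/-- Lower correlation dimension of a measure. -/
noncomputable def lcod {X : Type*} [MetricSpace X] [MeasurableSpace X]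
    (μ : Measure X) : ℝ :=
  liminf (fun r : ℝ => Real.log (corrInt μ r) / Real.log r) (𝓝[>] 0)

/-- Upper correlation dimension of a measure. -/
noncomputable def ucod {X : Type*} [MetricSpace X] [MeasurableSpace X]
    (μ : Measure X) : ℝ :=
  limsup (fun r : ℝ => Real.log (corrInt μ r) / Real.log r) (𝓝[>] 0)

/-- Upper correlation dimension of a set. -/
noncomputable def ucodSet {X : Type*} [MetricSpace X] [MeasurableSpace X]
    (E : Set X) : ℝ :=
  sSup (ucod '' probOn E)

/-- `coverNum E r` is the least number of sets of diameter at most `r` needed to cover `E`. -/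
noncomputable def coverNum {X : Type*} [MetricSpace X] (E : Set X) (r : ℝ) : ℕ :=
  sInf {n : ℕ | ∃ 𝒰 : Finset (Set X), 𝒰.card = n ∧
    (∀ U ∈ 𝒰, EMetric.diam U ≤ ENNReal.ofReal r) ∧ E ⊆ ⋃ U ∈ 𝒰, U}

/-- Lower box-counting dimension. -/
noncomputable def lbd {X : Type*} [MetricSpace X] (E : Set X) : ℝ :=
  liminf (fun r : ℝ => Real.log (coverNum E r : ℝ) / (-Real.log r)) (𝓝[>] 0)

/-- Upper box-counting dimension. -/
noncomputable def ubd {X : Type*} [MetricSpace X] (E : Set X) : ℝ :=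
  limsup (fun r : ℝ => Real.log (coverNum E r : ℝ) / (-Real.log r)) (𝓝[>] 0)

/-- Modified lower box dimension. -/
noncomputable def mlbd {X : Type*} [MetricSpace X] (E : Set X) : ℝ :=
  sInf {s : ℝ | ∃ F : ℕ → Set X, (∀ i, IsCompact (F i)) ∧ E ⊆ ⋃ i, F i ∧
    ∀ i, lbd (F i) ≤ s}

/-- Modified upper box dimension (= packing dimension). -/
noncomputable def mubd {X : Type*} [MetricSpace X] (E : Set X) : ℝ :=
  sInf {s : ℝ | ∃ F : ℕ → Set X, (∀ i, IsCompact (F i)) ∧ E ⊆ ⋃ i, F i ∧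
    ∀ i, ubd (F i) ≤ s}

/-- Fourier transform of a measure on Euclidean space. -/
noncomputable def ftMeas {d : ℕ} (μ : Measure (EuclideanSpace ℝ (Fin d)))
    (z : EuclideanSpace ℝ (Fin d)) : ℂ :=
  ∫ x, Complex.exp (Complex.I * (inner ℝ x z : ℝ)) ∂μ

/-- A dyadic cube of side `2^{-n}` in `ℝ^d`: a product of half-open intervals
`(j_i 2^{-n}, (j_i+1) 2^{-n}]` with integer `j_i`. -/
def IsDyadicCube {d : ℕ} (n : ℕ) (C : Set (EuclideanSpace ℝ (Fin d))) : Prop :=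
  ∃ j : Fin d → ℤ, C = {x | ∀ i : Fin d,
    (j i : ℝ) * 2 ^ (-(n : ℤ)) < x i ∧ x i ≤ ((j i : ℝ) + 1) * 2 ^ (-(n : ℤ))}

/-
If every dyadic cube of side `2⁻ⁿ` has `μ`-mass at most `2^{-ns}`, then every ball of radius `2⁻ⁿ`
meets at most `3^d` of them, so `∫ μ(B(x, 2⁻ⁿ)) dμ ≤ 3^d 2^{-ns}` and `s ≤ ucod μ`.
Conversely, at a radius `r ≈ 2⁻ⁿ` the correlation integral dominates `∑_C μ(C)²`; when it is at
most `r^s`, a Chebyshev bound shows that the cubes of mass `> 2^{-nt}/2` (for `t < s`) carry total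
mass `≲ 2^{-n(s-t)}`. Choosing infinitely many such scales `n_k` with summable masses and
conditioning `μ` on the complement of all these heavy cubes gives `ν ≪ μ`, still supported in `E`,
with `ν(C) ≤ 2^{-n_k t}` for every cube of side `2^{-n_k}`.
-/

open scoped ENNReal
open ProbabilityTheory

lemma msupport_mono_of_absolutelyContinuous {X : Type*} [TopologicalSpace X]
    [MeasurableSpace X] {μ ν : Measure X} (h : ν ≪ μ) : msupport ν ⊆ msupport μ :=
  fun _ hx U hU hxU hμU => hx U hU hxU (h hμU)

lemma ProbabilityTheory.cond_apply_le_two_mul {Ω : Type*} [MeasurableSpace Ω] {μ : Measure Ω}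
    {s : Set Ω} (hs : MeasurableSet s) (hμs : 2⁻¹ ≤ μ s) (t : Set Ω) :
    μ[t|s] ≤ 2 * μ t := by
  rw [cond_apply hs]
  gcongr
  · simpa using ENNReal.inv_le_inv.2 hμs
  · exact inter_subset_right

section CorrelationIntegral

variable {X : Type*} [MetricSpace X] [MeasurableSpace X] (μ : Measure X)

lemma lintegral_measure_closedBall_le_one [IsProbabilityMeasure μ] (r : ℝ) :
    ∫⁻ x, μ (closedBall x r) ∂μ ≤ 1 :=
  (lintegral_mono fun _ => prob_le_one).trans_eq (by simp)

lemma lintegral_measure_closedBall_ne_top [IsProbabilityMeasure μ] (r : ℝ) :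
    ∫⁻ x, μ (closedBall x r) ∂μ ≠ ∞ :=
  ne_top_of_le_ne_top ENNReal.one_ne_top (lintegral_measure_closedBall_le_one μ r)

lemma corrInt_nonneg (r : ℝ) : 0 ≤ corrInt μ r := ENNReal.toReal_nonneg

lemma corrInt_le_one [IsProbabilityMeasure μ] (r : ℝ) : corrInt μ r ≤ 1 :=
  ENNReal.toReal_le_of_le_ofReal zero_le_one
    (by simpa using lintegral_measure_closedBall_le_one μ r)

lemma measure_sq_le_setLIntegral_measure_closedBall {s : Set X} (hs : MeasurableSet s) {r : ℝ}
    (hsr : ∀ x ∈ s, ∀ y ∈ s, dist y x ≤ r) :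
    μ s ^ 2 ≤ ∫⁻ x in s, μ (closedBall x r) ∂μ := by
  rw [sq, ← setLIntegral_const]
  exact setLIntegral_mono' hs fun x hx => measure_mono fun y hy => hsr x hx y hy

lemma corrInt_pos [OpensMeasurableSpace X] [SecondCountableTopology X] [IsProbabilityMeasure μ]
    {r : ℝ} (hr : 0 < r) : 0 < corrInt μ r := by
  obtain ⟨x₀, hx₀⟩ := Measure.nonempty_support (IsProbabilityMeasure.ne_zero μ)
  have hpos : 0 < μ (closedBall x₀ (r / 2)) :=
    (Measure.mem_support_iff_forall x₀).1 hx₀ _ (closedBall_mem_nhds x₀ (half_pos hr))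
  have hdiam : ∀ x ∈ closedBall x₀ (r / 2), ∀ y ∈ closedBall x₀ (r / 2), dist y x ≤ r :=
    fun x hx y hy => (dist_triangle_right y x x₀).trans (by
      rw [mem_closedBall] at hx hy; linarith)
  refine ENNReal.toReal_pos (ne_of_gt ?_) (lintegral_measure_closedBall_ne_top μ r)
  calc 0 < μ (closedBall x₀ (r / 2)) ^ 2 := ENNReal.pow_pos hpos 2
    _ ≤ ∫⁻ x in closedBall x₀ (r / 2), μ (closedBall x r) ∂μ :=
      measure_sq_le_setLIntegral_measure_closedBall μ measurableSet_closedBall hdiam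
    _ ≤ ∫⁻ x, μ (closedBall x r) ∂μ := setLIntegral_le_lintegral _ _

lemma eventually_log_corrInt_div_log_nonneg [IsProbabilityMeasure μ] :
    ∀ᶠ r in 𝓝[>] 0, 0 ≤ Real.log (corrInt μ r) / Real.log r := by
  filter_upwards [Ioo_mem_nhdsGT one_pos] with r ⟨hr₀, hr₁⟩
  exact div_nonneg_of_nonpos (Real.log_nonpos (corrInt_nonneg μ r) (corrInt_le_one μ r))
    (Real.log_neg hr₀ hr₁).le

lemma eventually_log_corrInt_div_log_le {c : ℝ} {k : ℕ} (hc : 0 < c)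
    (h : ∀ᶠ r in 𝓝[>] 0, c * r ^ k ≤ corrInt μ r) :
    ∀ᶠ r in 𝓝[>] 0, Real.log (corrInt μ r) / Real.log r ≤ k + 1 := by
  filter_upwards [h, Ioo_mem_nhdsGT (lt_min one_pos hc)] with r hlow ⟨hr₀, hr⟩
  have hr₁ : r < 1 := hr.trans_le (min_le_left _ _)
  have hrc : r < c := hr.trans_le (min_le_right _ _)
  have hpow : r ^ (k + 1) ≤ corrInt μ r := by
    rw [pow_succ']
    exact (mul_le_mul_of_nonneg_right hrc.le (by positivity)).trans hlow
  rw [div_le_iff_of_neg (Real.log_neg hr₀ hr₁)]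
  have := Real.log_le_log (by positivity) hpow
  rw [Real.log_pow] at this
  exact_mod_cast this

lemma isCoboundedUnder_log_corrInt_div_log [IsProbabilityMeasure μ] :
    IsCoboundedUnder (· ≤ ·) (𝓝[>] 0) fun r => Real.log (corrInt μ r) / Real.log r :=
  (isBoundedUnder_of_eventually_ge (eventually_log_corrInt_div_log_nonneg μ)).isCoboundedUnder_flip

lemma frequently_lt_of_lt_ucod [IsProbabilityMeasure μ] {s : ℝ} (hs : s < ucod μ) :
    ∃ᶠ r in 𝓝[>] 0, s < Real.log (corrInt μ r) / Real.log r :=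
  frequently_lt_of_lt_limsup (isCoboundedUnder_log_corrInt_div_log μ) hs

lemma frequently_corrInt_lt_rpow [OpensMeasurableSpace X] [SecondCountableTopology X]
    [IsProbabilityMeasure μ] {s : ℝ} (hs : s < ucod μ) : ∃ᶠ r in 𝓝[>] 0, corrInt μ r < r ^ s := by
  refine ((frequently_lt_of_lt_ucod μ hs).and_eventually (Ioo_mem_nhdsGT one_pos)).mono ?_
  rintro r ⟨h, hr₀, hr₁⟩
  rw [lt_div_iff_of_neg (Real.log_neg hr₀ hr₁), ← Real.log_rpow hr₀] at h
  exact (Real.log_lt_log_iff (corrInt_pos μ hr₀) (Real.rpow_pos_of_pos hr₀ s)).1 h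

end CorrelationIntegral

section Dyadic

variable {d : ℕ}

local notation "ℝᵈ" => EuclideanSpace ℝ (Fin d)

def dyadicCube (n : ℕ) (j : Fin d → ℤ) : Set ℝᵈ :=
  {x | ∀ i, (j i : ℝ) * 2 ^ (-(n : ℤ)) < x i ∧ x i ≤ ((j i : ℝ) + 1) * 2 ^ (-(n : ℤ))}

noncomputable def dyadicIndex (n : ℕ) (x : ℝᵈ) : Fin d → ℤ := fun i => ⌈x i * 2 ^ n⌉ - 1

lemma mem_dyadicCube_iff {n : ℕ} {j : Fin d → ℤ} {x : ℝᵈ} :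
    x ∈ dyadicCube n j ↔ dyadicIndex n x = j := by
  simp only [dyadicCube, dyadicIndex, mem_ofPred_eq, funext_iff, sub_eq_iff_eq_add,
    Int.ceil_eq_iff, zpow_neg, zpow_natCast, ← div_eq_mul_inv]
  refine forall_congr' fun i => ?_
  rw [div_lt_iff₀ (by positivity), le_div_iff₀ (by positivity)]
  push_cast
  constructor <;> rintro ⟨h₁, h₂⟩ <;> constructor <;> linarith

lemma mem_dyadicCube_dyadicIndex (n : ℕ) (x : ℝᵈ) : x ∈ dyadicCube n (dyadicIndex n x) :=
  mem_dyadicCube_iff.2 rfl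

lemma pairwise_disjoint_dyadicCube (n : ℕ) :
    Pairwise (Function.onFun Disjoint (dyadicCube (d := d) n)) :=
  fun _ _ hjk => disjoint_left.2 fun _ hj hk =>
    hjk ((mem_dyadicCube_iff.1 hj).symm.trans (mem_dyadicCube_iff.1 hk))

lemma iUnion_dyadicCube (n : ℕ) : ⋃ j, dyadicCube (d := d) n j = univ :=
  eq_univ_of_forall fun x => mem_iUnion.2 ⟨_, mem_dyadicCube_dyadicIndex n x⟩

lemma measurableSet_dyadicCube (n : ℕ) (j : Fin d → ℤ) : MeasurableSet (dyadicCube n j) := by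
  simp only [dyadicCube, ofPred_forall, ofPred_and]
  exact MeasurableSet.iInter fun i =>
    have hi : Measurable fun x : ℝᵈ => x i := (EuclideanSpace.proj i).continuous.measurable
    (measurableSet_lt measurable_const hi).inter (measurableSet_le hi measurable_const)

lemma dist_le_of_mem_dyadicCube {n : ℕ} {j : Fin d → ℤ} {x y : ℝᵈ}
    (hx : x ∈ dyadicCube n j) (hy : y ∈ dyadicCube n j) :
    dist x y ≤ (d + 1) * 2 ^ (-(n : ℤ)) := by
  have hcoord : ∀ i, dist (x i) (y i) ^ 2 ≤ ((2 : ℝ) ^ (-(n : ℤ))) ^ 2 := fun i => by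
    have := hx i; have := hy i
    exact pow_le_pow_left₀ dist_nonneg (by rw [Real.dist_eq, abs_le]; constructor <;> linarith) 2
  rw [EuclideanSpace.dist_eq, Real.sqrt_le_left (by positivity)]
  calc ∑ i, dist (x i) (y i) ^ 2 ≤ ∑ _i : Fin d, ((2 : ℝ) ^ (-(n : ℤ))) ^ 2 :=
        Finset.sum_le_sum fun i _ => hcoord i
    _ = d * ((2 : ℝ) ^ (-(n : ℤ))) ^ 2 := by simp
    _ ≤ ((d + 1) * 2 ^ (-(n : ℤ))) ^ 2 := by
        rw [mul_pow]; gcongr; nlinarith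

lemma dyadicIndex_sub_mem_of_dist_le {n : ℕ} {x y : ℝᵈ} (h : dist y x ≤ 2 ^ (-(n : ℤ))) :
    dyadicIndex n y - dyadicIndex n x ∈ Fintype.piFinset fun _ => ({-1, 0, 1} : Finset ℤ) := by
  refine Fintype.mem_piFinset.2 fun i => ?_
  have hi : |y i * 2 ^ n - x i * 2 ^ n| ≤ 1 := by
    rw [← sub_mul, abs_mul, abs_of_pos (by positivity : (0 : ℝ) < 2 ^ n),
      ← le_div_iff₀ (by positivity), one_div, ← zpow_natCast, ← zpow_neg, ← Real.dist_eq]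
    exact (PiLp.dist_apply_le y x i).trans h
  rw [abs_le] at hi
  have h₁ : ⌈y i * 2 ^ n⌉ ≤ ⌈x i * 2 ^ n⌉ + 1 := by
    rw [← Int.ceil_add_one]; exact Int.ceil_mono (by linarith)
  have h₂ : ⌈x i * 2 ^ n⌉ - 1 ≤ ⌈y i * 2 ^ n⌉ := by
    rw [← Int.ceil_sub_one]; exact Int.ceil_mono (by linarith)
  simp only [Pi.sub_apply, dyadicIndex, Finset.mem_insert, Finset.mem_singleton]
  omega

lemma measure_closedBall_le_of_forall_measure_dyadicCube_le (μ : Measure ℝᵈ) {n : ℕ}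
    {B : ℝ≥0∞} (hB : ∀ j, μ (dyadicCube n j) ≤ B) (x : ℝᵈ) :
    μ (closedBall x (2 ^ (-(n : ℤ)))) ≤ 3 ^ d * B := by
  set N := Fintype.piFinset fun _ : Fin d => ({-1, 0, 1} : Finset ℤ)
  have hcover : closedBall x (2 ^ (-(n : ℤ))) ⊆ ⋃ e ∈ N, dyadicCube n (dyadicIndex n x + e) :=
    fun y hy => mem_biUnion (dyadicIndex_sub_mem_of_dist_le hy)
      (by simpa using mem_dyadicCube_dyadicIndex n y)
  calc μ (closedBall x (2 ^ (-(n : ℤ))))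
      ≤ ∑ e ∈ N, μ (dyadicCube n (dyadicIndex n x + e)) :=
        (measure_mono hcover).trans (measure_biUnion_finset_le _ _)
    _ ≤ ∑ _e ∈ N, B := Finset.sum_le_sum fun e _ => hB _
    _ = 3 ^ d * B := by simp [N, Fintype.card_piFinset]

lemma dyadicCube_zero_subset_biUnion (n : ℕ) (j : Fin d → ℤ) :
    dyadicCube 0 j ⊆ ⋃ m ∈ Fintype.piFinset fun i => Finset.Ico (j i * 2 ^ n) ((j i + 1) * 2 ^ n),
      dyadicCube n m := by
  intro x hx
  refine mem_biUnion (Fintype.mem_piFinset.2 fun i => ?_) (mem_dyadicCube_dyadicIndex n x)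
  obtain ⟨h₁, h₂⟩ := hx i
  simp only [Nat.cast_zero, neg_zero, zpow_zero, mul_one] at h₁ h₂
  have hlt : j i * 2 ^ n < ⌈x i * 2 ^ n⌉ := Int.lt_ceil.2 (by push_cast; gcongr)
  have hle : ⌈x i * 2 ^ n⌉ ≤ (j i + 1) * 2 ^ n := Int.ceil_le.2 (by push_cast; gcongr)
  rw [Finset.mem_Ico, dyadicIndex]
  omega

lemma exists_measure_dyadicCube_zero_le (μ : Measure ℝᵈ) (n : ℕ) (j : Fin d → ℤ) :
    ∃ m, μ (dyadicCube 0 j) ≤ 2 ^ (n * d) * μ (dyadicCube n m) := by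
  set M := Fintype.piFinset fun i => Finset.Ico (j i * 2 ^ n) ((j i + 1) * 2 ^ n)
  have hcard : M.card = 2 ^ (n * d) := by
    have h : ∀ i, ((j i + 1) * 2 ^ n - j i * 2 ^ n).toNat = 2 ^ n := fun i => by
      rw [show (j i + 1) * 2 ^ n - j i * 2 ^ n = ((2 ^ n : ℕ) : ℤ) by push_cast; ring,
        Int.toNat_natCast]
    simp [M, Fintype.card_piFinset, h, pow_mul]
  obtain ⟨m, -, hmax⟩ := M.exists_max_image (fun m => μ (dyadicCube n m))
    (Finset.card_pos.1 (by rw [hcard]; positivity))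
  refine ⟨m, ?_⟩
  calc μ (dyadicCube 0 j) ≤ ∑ m ∈ M, μ (dyadicCube n m) :=
        (measure_mono (dyadicCube_zero_subset_biUnion n j)).trans (measure_biUnion_finset_le _ _)
    _ ≤ ∑ _m' ∈ M, μ (dyadicCube n m) := Finset.sum_le_sum hmax
    _ = 2 ^ (n * d) * μ (dyadicCube n m) := by simp [hcard]

lemma tsum_measure_dyadicCube_sq_le (μ : Measure ℝᵈ) {n : ℕ} {r : ℝ}
    (hr : (d + 1) * 2 ^ (-(n : ℤ)) ≤ r) :
    ∑' j, μ (dyadicCube n j) ^ 2 ≤ ∫⁻ x, μ (closedBall x r) ∂μ :=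
  calc ∑' j, μ (dyadicCube n j) ^ 2
      ≤ ∑' j, ∫⁻ x in dyadicCube n j, μ (closedBall x r) ∂μ :=
        ENNReal.tsum_le_tsum fun j => measure_sq_le_setLIntegral_measure_closedBall μ
          (measurableSet_dyadicCube n j) fun _ hx _ hy => (dist_le_of_mem_dyadicCube hy hx).trans hr
    _ = ∫⁻ x, μ (closedBall x r) ∂μ := by
        rw [← lintegral_iUnion (measurableSet_dyadicCube n) (pairwise_disjoint_dyadicCube n),
          iUnion_dyadicCube, Measure.restrict_univ]

lemma exists_dyadic_scale {a r : ℝ} (hr : 0 < r) (hra : r ≤ a) :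
    ∃ n : ℕ, a * 2 ^ (-(n : ℤ)) < r ∧ r ≤ 2 * a * 2 ^ (-(n : ℤ)) := by
  obtain ⟨k, hk₁, hk₂⟩ := exists_nat_pow_near ((one_le_div hr).2 hra) one_lt_two
  rw [le_div_iff₀ hr] at hk₁
  rw [div_lt_iff₀ hr] at hk₂
  refine ⟨k + 1, ?_, ?_⟩ <;>
    rw [zpow_neg, zpow_natCast, ← div_eq_mul_inv]
  · rw [div_lt_iff₀ (by positivity)]; linarith
  · rw [le_div_iff₀ (by positivity), pow_succ]; linarith

-- This bound keeps the ratio in `ucod` bounded above, so that its `limsup` is not a junk value.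
lemma exists_pos_eventually_mul_pow_le_corrInt (μ : Measure ℝᵈ) [IsProbabilityMeasure μ] :
    ∃ c > 0, ∀ᶠ r in 𝓝[>] 0, c * r ^ (2 * d) ≤ corrInt μ r := by
  obtain ⟨j, hj⟩ :=
    exists_pos_measure_of_cover (iUnion_dyadicCube 0) (IsProbabilityMeasure.ne_zero μ)
  set p := (μ (dyadicCube 0 j)).toReal
  have hp : 0 < p := ENNReal.toReal_pos hj.ne' (measure_ne_top μ _)
  refine ⟨(p / (2 * (d + 1)) ^ d) ^ 2, by positivity, ?_⟩
  filter_upwards [Ioo_mem_nhdsGT (show (0 : ℝ) < d + 1 by positivity)] with r ⟨hr₀, hr⟩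
  obtain ⟨n, hn₁, hn₂⟩ := exists_dyadic_scale hr₀ hr.le
  obtain ⟨m, hm⟩ := exists_measure_dyadicCube_zero_le μ n j
  set δ : ℝ := 2 ^ (-(n : ℤ))
  set q := (μ (dyadicCube n m)).toReal
  have hmass : p * δ ^ d ≤ q := by
    have h := ENNReal.toReal_mono (by finiteness) hm
    rw [ENNReal.toReal_mul, ENNReal.toReal_pow, ENNReal.toReal_ofNat] at h
    have hδ : (2 : ℝ) ^ (n * d) * δ ^ d = 1 := by
      simp only [δ, zpow_neg, zpow_natCast, inv_pow, pow_mul]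
      exact mul_inv_cancel₀ (by positivity)
    calc p * δ ^ d ≤ 2 ^ (n * d) * q * δ ^ d := by gcongr
      _ = q := by rw [mul_right_comm, hδ, one_mul]
  have hsq : q ^ 2 ≤ corrInt μ r := by
    rw [← ENNReal.toReal_pow]
    exact ENNReal.toReal_mono (lintegral_measure_closedBall_ne_top μ r)
      ((ENNReal.le_tsum m).trans (tsum_measure_dyadicCube_sq_le μ hn₁.le))
  have hrδ : r / (2 * (d + 1)) ≤ δ := by
    rw [div_le_iff₀ (by positivity)]; linarith
  calc (p / (2 * (d + 1)) ^ d) ^ 2 * r ^ (2 * d) = (p * (r / (2 * (d + 1))) ^ d) ^ 2 := by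
        rw [div_pow r, pow_mul']; ring
    _ ≤ (p * δ ^ d) ^ 2 := by gcongr
    _ ≤ q ^ 2 := by gcongr
    _ ≤ corrInt μ r := hsq

lemma eventually_log_corrInt_div_log_le_two_mul_add_one (μ : Measure ℝᵈ) [IsProbabilityMeasure μ] :
    ∀ᶠ r in 𝓝[>] 0, Real.log (corrInt μ r) / Real.log r ≤ 2 * d + 1 := by
  obtain ⟨c, hc, h⟩ := exists_pos_eventually_mul_pow_le_corrInt μ
  simpa using eventually_log_corrInt_div_log_le μ hc h

lemma ucod_le_two_mul_add_one (μ : Measure ℝᵈ) [IsProbabilityMeasure μ] : ucod μ ≤ 2 * d + 1 :=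
  limsup_le_of_le (isCoboundedUnder_log_corrInt_div_log μ)
    (eventually_log_corrInt_div_log_le_two_mul_add_one μ)

lemma le_ucod_of_frequently_le (μ : Measure ℝᵈ) [IsProbabilityMeasure μ] {s : ℝ}
    (h : ∃ᶠ r in 𝓝[>] 0, s ≤ Real.log (corrInt μ r) / Real.log r) : s ≤ ucod μ :=
  le_limsup_of_frequently_le h
    (isBoundedUnder_of_eventually_le (eventually_log_corrInt_div_log_le_two_mul_add_one μ))

lemma sub_le_log_corrInt_div_log_of_measure_dyadicCube_le (μ : Measure ℝᵈ)
    [IsProbabilityMeasure μ] {m : ℕ} (hm : 0 < m) {s : ℝ}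
    (h : ∀ j, μ (dyadicCube m j) ≤ ENNReal.ofReal (2 ^ (-(m : ℝ) * s))) :
    s - d * Real.log 3 / (m * Real.log 2) ≤
      Real.log (corrInt μ (2 ^ (-(m : ℤ)))) / Real.log (2 ^ (-(m : ℤ))) := by
  have hcorr : corrInt μ (2 ^ (-(m : ℤ))) ≤ 3 ^ d * 2 ^ (-(m : ℝ) * s) := by
    refine ENNReal.toReal_le_of_le_ofReal (by positivity) ?_
    calc ∫⁻ x, μ (closedBall x (2 ^ (-(m : ℤ)))) ∂μ
        ≤ ∫⁻ _x, 3 ^ d * ENNReal.ofReal (2 ^ (-(m : ℝ) * s)) ∂μ :=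
          lintegral_mono fun x => measure_closedBall_le_of_forall_measure_dyadicCube_le μ h x
      _ = ENNReal.ofReal (3 ^ d * 2 ^ (-(m : ℝ) * s)) := by
          rw [lintegral_const, measure_univ, mul_one, ENNReal.ofReal_mul (by positivity),
            ENNReal.ofReal_pow (by norm_num), ENNReal.ofReal_ofNat]
  have hlog : Real.log (corrInt μ (2 ^ (-(m : ℤ)))) ≤ d * Real.log 3 - m * s * Real.log 2 := by
    refine (Real.log_le_log (corrInt_pos μ (by positivity)) hcorr).trans_eq ?_
    rw [Real.log_mul (by positivity) (by positivity), Real.log_pow, Real.log_rpow two_pos]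
    ring
  have hlog2 : 0 < Real.log 2 := Real.log_pos one_lt_two
  have hm' : (0 : ℝ) < m := Nat.cast_pos.2 hm
  have hlogr : Real.log ((2 : ℝ) ^ (-(m : ℤ))) = -(m * Real.log 2) := by
    rw [Real.log_zpow]; push_cast; ring
  rw [hlogr, le_div_iff_of_neg (neg_lt_zero.2 (mul_pos hm' hlog2))]
  have : (s - d * Real.log 3 / (m * Real.log 2)) * -(m * Real.log 2) =
      d * Real.log 3 - m * s * Real.log 2 := by
    field_simp; ring
  linarith

lemma le_ucod_of_measure_dyadicCube_le (μ : Measure ℝᵈ) [IsProbabilityMeasure μ] {s : ℝ}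
    {n : ℕ → ℕ} (hn : Tendsto n atTop atTop)
    (hcube : ∀ k j, μ (dyadicCube (n k) j) ≤ ENNReal.ofReal (2 ^ (-(n k : ℝ) * s))) :
    s ≤ ucod μ := by
  have hr : Tendsto (fun k => (2 : ℝ) ^ (-(n k : ℤ))) atTop (𝓝[>] 0) := by
    refine tendsto_nhdsWithin_iff.2 ⟨?_, Eventually.of_forall fun k => mem_Ioi.2 (by positivity)⟩
    simpa [zpow_neg, inv_pow, Function.comp_def] using
      (tendsto_pow_atTop_nhds_zero_of_lt_one (by norm_num : (0 : ℝ) ≤ 2⁻¹) (by norm_num)).comp hn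
  have herr : Tendsto (fun k => d * Real.log 3 / (n k * Real.log 2)) atTop (𝓝 0) :=
    tendsto_const_nhds.div_atTop
      ((tendsto_natCast_atTop_atTop.comp hn).atTop_mul_const (Real.log_pos one_lt_two))
  refine le_of_forall_sub_le fun ε hε => le_ucod_of_frequently_le μ (hr.frequently ?_)
  refine Eventually.frequently ?_
  filter_upwards [herr.eventually (gt_mem_nhds hε), hn.eventually_gt_atTop 0] with k hk hk₀
  linarith [sub_le_log_corrInt_div_log_of_measure_dyadicCube_le μ hk₀ (hcube k)]

def heavyCubes (μ : Measure ℝᵈ) (n : ℕ) (ε : ℝ≥0∞) : Set ℝᵈ :=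
  ⋃ j ∈ {j | ε < μ (dyadicCube n j)}, dyadicCube n j

lemma measurableSet_heavyCubes (μ : Measure ℝᵈ) (n : ℕ) (ε : ℝ≥0∞) :
    MeasurableSet (heavyCubes μ n ε) :=
  .biUnion (to_countable _) fun j _ => measurableSet_dyadicCube n j

lemma mul_measure_heavyCubes_le (μ : Measure ℝᵈ) {n : ℕ} (ε : ℝ≥0∞) {r : ℝ}
    (hr : (d + 1) * 2 ^ (-(n : ℤ)) ≤ r) :
    ε * μ (heavyCubes μ n ε) ≤ ∫⁻ x, μ (closedBall x r) ∂μ :=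
  calc ε * μ (heavyCubes μ n ε)
      ≤ ε * ∑' j : {j | ε < μ (dyadicCube n j)}, μ (dyadicCube n j) := by
        gcongr; exact measure_biUnion_le μ (to_countable _) _
    _ = ∑' j : {j | ε < μ (dyadicCube n j)}, ε * μ (dyadicCube n j) := ENNReal.tsum_mul_left.symm
    _ ≤ ∑' j : {j | ε < μ (dyadicCube n j)}, μ (dyadicCube n j) ^ 2 :=
        ENNReal.tsum_le_tsum fun j => by rw [sq]; exact mul_le_mul_left j.2.le _
    _ ≤ ∑' j, μ (dyadicCube n j) ^ 2 :=
        ENNReal.tsum_comp_le_tsum_of_injective Subtype.val_injective _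
    _ ≤ ∫⁻ x, μ (closedBall x r) ∂μ := tsum_measure_dyadicCube_sq_le μ hr

-- The threshold is halved so that conditioning on a set of mass `≥ 1/2` keeps light cubes
-- below `2^{-nt}`.
lemma measure_heavyCubes_le_of_corrInt_le (μ : Measure ℝᵈ) [IsProbabilityMeasure μ] {n : ℕ}
    {r s : ℝ} (t : ℝ) (hs : 0 ≤ s) (hr₁ : (d + 1) * 2 ^ (-(n : ℤ)) ≤ r)
    (hr₂ : r ≤ 2 * (d + 1) * 2 ^ (-(n : ℤ))) (hcorr : corrInt μ r ≤ r ^ s) :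
    μ (heavyCubes μ n (ENNReal.ofReal (2 ^ (-(n : ℝ) * t) / 2))) ≤
      ENNReal.ofReal (2 * (2 * (d + 1)) ^ s * 2 ^ (-(n : ℝ) * (s - t))) := by
  have hε : 0 < (2 : ℝ) ^ (-(n : ℝ) * t) / 2 := by positivity
  have hr₀ : 0 < r := lt_of_lt_of_le (by positivity) hr₁
  have hL : ∫⁻ x, μ (closedBall x r) ∂μ ≤ ENNReal.ofReal (r ^ s) :=
    (ENNReal.le_ofReal_iff_toReal_le (lintegral_measure_closedBall_ne_top μ r) (by positivity)).2
      hcorr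
  have hrs : r ^ s ≤ (2 * (d + 1)) ^ s * 2 ^ (-(n : ℝ) * s) := by
    calc r ^ s ≤ (2 * (d + 1) * 2 ^ (-(n : ℤ))) ^ s := Real.rpow_le_rpow hr₀.le hr₂ hs
      _ = (2 * (d + 1)) ^ s * 2 ^ (-(n : ℝ) * s) := by
        rw [Real.mul_rpow (by positivity) (by positivity), ← Real.rpow_intCast,
          ← Real.rpow_mul zero_le_two]
        push_cast; rfl
  have hexp : (2 : ℝ) ^ (-(n : ℝ) * (s - t)) * 2 ^ (-(n : ℝ) * t) = 2 ^ (-(n : ℝ) * s) := by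
    rw [← Real.rpow_add two_pos]; ring_nf
  calc μ (heavyCubes μ n (ENNReal.ofReal (2 ^ (-(n : ℝ) * t) / 2)))
      ≤ ENNReal.ofReal (r ^ s) / ENNReal.ofReal (2 ^ (-(n : ℝ) * t) / 2) := by
        rw [ENNReal.le_div_iff_mul_le (.inl (by simpa using hε)) (.inl ENNReal.ofReal_ne_top),
          mul_comm]
        exact (mul_measure_heavyCubes_le μ _ hr₁).trans hL
    _ = ENNReal.ofReal (r ^ s / (2 ^ (-(n : ℝ) * t) / 2)) := (ENNReal.ofReal_div_of_pos hε).symm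
    _ ≤ ENNReal.ofReal (2 * (2 * (d + 1)) ^ s * 2 ^ (-(n : ℝ) * (s - t))) := by
        refine ENNReal.ofReal_le_ofReal ((div_le_iff₀ hε).2 (hrs.trans_eq ?_))
        rw [← hexp]; ring

lemma frequently_exists_corrInt_le_rpow (μ : Measure ℝᵈ) [IsProbabilityMeasure μ] {s : ℝ}
    (hs : s < ucod μ) :
    ∃ᶠ n : ℕ in atTop, ∃ r : ℝ, (d + 1) * 2 ^ (-(n : ℤ)) ≤ r ∧ r ≤ 2 * (d + 1) * 2 ^ (-(n : ℤ)) ∧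
      corrInt μ r ≤ r ^ s := by
  refine frequently_atTop.2 fun N => ?_
  have hN : (0 : ℝ) < (d + 1) * 2 ^ (-(N : ℤ)) := by positivity
  obtain ⟨r, hcorr, hr₀, hrN⟩ :=
    ((frequently_corrInt_lt_rpow μ hs).and_eventually (Ioo_mem_nhdsGT hN)).exists
  have hrd : r ≤ d + 1 :=
    hrN.le.trans (mul_le_of_le_one_right (by positivity)
      (zpow_le_one_of_nonpos₀ (one_le_two : (1 : ℝ) ≤ 2) (by simp)))
  obtain ⟨n, hn₁, hn₂⟩ := exists_dyadic_scale hr₀ hrd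
  refine ⟨n, ?_, r, hn₁.le, hn₂, hcorr.le⟩
  have : (2 : ℝ) ^ (-(n : ℤ)) < 2 ^ (-(N : ℤ)) :=
    lt_of_mul_lt_mul_left (hn₁.trans hrN) (by positivity)
  have := (zpow_lt_zpow_iff_right₀ (one_lt_two : (1 : ℝ) < 2)).1 this
  omega

lemma frequently_measure_heavyCubes_lt (μ : Measure ℝᵈ) [IsProbabilityMeasure μ] {t : ℝ}
    (ht : 0 ≤ t) (htμ : t < ucod μ) {δ : ℝ≥0∞} (hδ : 0 < δ) :
    ∃ᶠ n : ℕ in atTop, μ (heavyCubes μ n (ENNReal.ofReal (2 ^ (-(n : ℝ) * t) / 2))) < δ := by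
  obtain ⟨s, hts, hsμ⟩ := exists_between htμ
  have hlim : Tendsto
      (fun n : ℕ => ENNReal.ofReal (2 * (2 * (d + 1)) ^ s * 2 ^ (-(n : ℝ) * (s - t)))) atTop
      (𝓝 0) := by
    have hq : ∀ n : ℕ, (2 : ℝ) ^ (-(n : ℝ) * (s - t)) = (2 ^ (-(s - t))) ^ n := fun n => by
      rw [← Real.rpow_natCast, ← Real.rpow_mul zero_le_two]; ring_nf
    have h := ENNReal.tendsto_ofReal ((tendsto_pow_atTop_nhds_zero_of_lt_one
      (Real.rpow_nonneg zero_le_two _) (Real.rpow_lt_one_of_one_lt_of_neg one_lt_two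
        (show -(s - t) < 0 by linarith))).const_mul (2 * (2 * ((d : ℝ) + 1)) ^ s))
    rw [mul_zero, ENNReal.ofReal_zero] at h
    exact h.congr fun n => by rw [hq]
  refine ((frequently_exists_corrInt_le_rpow μ hsμ).and_eventually
    (hlim.eventually (gt_mem_nhds hδ))).mono ?_
  rintro n ⟨⟨r, hr₁, hr₂, hcorr⟩, hsmall⟩
  exact (measure_heavyCubes_le_of_corrInt_le μ t (ht.trans hts.le) hr₁ hr₂ hcorr).trans_lt hsmall

lemma exists_strictMono_tsum_measure_heavyCubes_le (μ : Measure ℝᵈ) [IsProbabilityMeasure μ]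
    {t : ℝ} (ht : 0 ≤ t) (htμ : t < ucod μ) :
    ∃ n : ℕ → ℕ, StrictMono n ∧ (∀ k, 0 < n k) ∧
      ∑' k, μ (heavyCubes μ (n k) (ENNReal.ofReal (2 ^ (-(n k : ℝ) * t) / 2))) ≤ 2⁻¹ := by
  obtain ⟨n, hn, hsmall⟩ := extraction_forall_of_frequently fun k =>
    (frequently_measure_heavyCubes_lt μ ht htμ (δ := 2⁻¹ ^ (k + 2))
      (ENNReal.pow_pos (by norm_num) _)).and_eventually
      (eventually_gt_atTop 0)
  refine ⟨n, hn, fun k => (hsmall k).2, ?_⟩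
  calc ∑' k, μ (heavyCubes μ (n k) (ENNReal.ofReal (2 ^ (-(n k : ℝ) * t) / 2)))
      ≤ ∑' k : ℕ, (2⁻¹ : ℝ≥0∞) ^ (k + 2) := ENNReal.tsum_le_tsum fun k => (hsmall k).1.le
    _ = 2⁻¹ := by
        simp_rw [pow_add]
        rw [ENNReal.tsum_mul_right, ENNReal.tsum_geometric_two, sq, ← mul_assoc,
          ENNReal.mul_inv_cancel two_ne_zero ENNReal.ofNat_ne_top, one_mul]

theorem exists_absolutelyContinuous_measure_dyadicCube_le (μ : Measure ℝᵈ)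
    [IsProbabilityMeasure μ] {t : ℝ} (ht : 0 ≤ t) (htμ : t < ucod μ) :
    ∃ ν : Measure ℝᵈ, IsProbabilityMeasure ν ∧ ν ≪ μ ∧ ∃ n : ℕ → ℕ, StrictMono n ∧
      (∀ k, 0 < n k) ∧ ∀ k j, ν (dyadicCube (n k) j) ≤ ENNReal.ofReal (2 ^ (-(n k : ℝ) * t)) := by
  obtain ⟨n, hn, hpos, hsum⟩ := exists_strictMono_tsum_measure_heavyCubes_le μ ht htμ
  set ε : ℕ → ℝ≥0∞ := fun k => ENNReal.ofReal (2 ^ (-(n k : ℝ) * t) / 2)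
  set A := ⋃ k, heavyCubes μ (n k) (ε k)
  have hA : MeasurableSet A := .iUnion fun k => measurableSet_heavyCubes μ _ _
  have hAc : 2⁻¹ ≤ μ Aᶜ := by
    rw [prob_compl_eq_one_sub hA, ← ENNReal.one_sub_inv_two]
    exact tsub_le_tsub_left ((measure_iUnion_le _).trans hsum) 1
  refine ⟨μ[|Aᶜ], cond_isProbabilityMeasure (lt_of_lt_of_le (by norm_num) hAc).ne',
    cond_absolutelyContinuous, n, hn, hpos, fun k j => ?_⟩
  by_cases hj : ε k < μ (dyadicCube (n k) j)
  · have hsub : dyadicCube (n k) j ⊆ A :=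
      subset_iUnion_of_subset k (subset_biUnion_of_mem (u := fun j => dyadicCube (n k) j) hj)
    rw [cond_apply hA.compl, disjoint_compl_left.mono_right hsub |>.inter_eq, measure_empty,
      mul_zero]
    exact zero_le
  · calc μ[dyadicCube (n k) j|Aᶜ] ≤ 2 * μ (dyadicCube (n k) j) :=
          cond_apply_le_two_mul hA.compl hAc _
      _ ≤ 2 * ε k := by gcongr; exact not_lt.1 hj
      _ = ENNReal.ofReal (2 ^ (-(n k : ℝ) * t)) := by
        rw [← ENNReal.ofReal_ofNat 2, ← ENNReal.ofReal_mul zero_le_two,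
          mul_div_cancel₀ _ two_ne_zero]

def IsDyadicMassExponent (E : Set ℝᵈ) (s : ℝ) : Prop :=
  0 ≤ s ∧ ∃ μ ∈ probOn E, ∃ n : ℕ → ℕ, StrictMono n ∧ (∀ k, 0 < n k) ∧
    ∀ (k : ℕ) (C : Set ℝᵈ), IsDyadicCube (n k) C → μ C ≤ ENNReal.ofReal (2 ^ (-(n k : ℝ) * s))

lemma isDyadicMassExponent_zero {E : Set ℝᵈ} {μ : Measure ℝᵈ} (hμ : μ ∈ probOn E) :
    IsDyadicMassExponent E 0 :=
  have := hμ.1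
  ⟨le_rfl, μ, hμ, (· + 1), strictMono_id.add_const 1, fun k => k.succ_pos,
    fun _ _ _ => by simpa using prob_le_one⟩

lemma isDyadicMassExponent_of_lt_ucod {E : Set ℝᵈ} {μ : Measure ℝᵈ} (hμ : μ ∈ probOn E) {t : ℝ}
    (ht : 0 ≤ t) (htμ : t < ucod μ) : IsDyadicMassExponent E t := by
  have := hμ.1
  obtain ⟨ν, hν, hνμ, n, hn, hpos, hcube⟩ :=
    exists_absolutelyContinuous_measure_dyadicCube_le μ ht htμ
  exact ⟨ht, ν, ⟨hν, (msupport_mono_of_absolutelyContinuous hνμ).trans hμ.2⟩, n, hn, hpos,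
    fun k _ ⟨j, hC⟩ => hC ▸ hcube k j⟩

lemma bddAbove_ucod_image_probOn (E : Set ℝᵈ) : BddAbove (ucod '' probOn E) := by
  refine ⟨2 * d + 1, ?_⟩
  rintro _ ⟨μ, hμ, rfl⟩
  have := hμ.1
  exact ucod_le_two_mul_add_one μ

lemma le_ucodSet_of_isDyadicMassExponent {E : Set ℝᵈ} {s : ℝ} (hs : IsDyadicMassExponent E s) :
    s ≤ ucodSet E := by
  obtain ⟨-, μ, hμ, n, hn, -, hcube⟩ := hs
  have := hμ.1
  exact (le_ucod_of_measure_dyadicCube_le μ hn.tendsto_atTop fun k j => hcube k _ ⟨j, rfl⟩).trans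
    (le_csSup (bddAbove_ucod_image_probOn E) ⟨μ, hμ, rfl⟩)

end Dyadic

theorem stmt2_general {d : ℕ} (E : Set (EuclideanSpace ℝ (Fin d))) :
    ucodSet E = sSup {s : ℝ | 0 ≤ s ∧ ∃ μ ∈ probOn E, ∃ n : ℕ → ℕ,
      StrictMono n ∧ (∀ k, 0 < n k) ∧
      ∀ (k : ℕ) (C : Set (EuclideanSpace ℝ (Fin d))), IsDyadicCube (n k) C →
        μ C ≤ ENNReal.ofReal ((2 : ℝ) ^ (-(n k : ℝ) * s))} := by
  show ucodSet E = sSup {s | IsDyadicMassExponent E s}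
  rcases (probOn E).eq_empty_or_nonempty with hE | ⟨μ₀, hμ₀⟩
  · have hS : {s | IsDyadicMassExponent E s} = ∅ :=
      eq_empty_of_forall_notMem fun _ ⟨_, μ, hμ, _⟩ => hE.subset hμ
    rw [ucodSet, hE, image_empty, hS]
  have hbdd : BddAbove {s | IsDyadicMassExponent E s} :=
    ⟨ucodSet E, fun _ => le_ucodSet_of_isDyadicMassExponent⟩
  refine le_antisymm (csSup_le ⟨_, mem_image_of_mem ucod hμ₀⟩ ?_)
    (csSup_le ⟨0, isDyadicMassExponent_zero hμ₀⟩ fun _ => le_ucodSet_of_isDyadicMassExponent)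
  rintro _ ⟨μ, hμ, rfl⟩
  refine le_of_forall_lt_imp_le_of_dense fun t ht => ?_
  rcases lt_or_ge t 0 with ht₀ | ht₀
  · exact ht₀.le.trans (le_csSup hbdd (isDyadicMassExponent_zero hμ₀))
  · exact le_csSup hbdd (isDyadicMassExponent_of_lt_ucod hμ ht₀ ht)

theorem stmt2 {d : ℕ} (E : Set (EuclideanSpace ℝ (Fin d))) (hE : MeasurableSet E) :
    ucodSet E = sSup {s : ℝ | 0 ≤ s ∧ ∃ μ ∈ probOn E, ∃ n : ℕ → ℕ,
      StrictMono n ∧ (∀ k, 0 < n k) ∧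
      ∀ (k : ℕ) (C : Set (EuclideanSpace ℝ (Fin d))), IsDyadicCube (n k) C →
        μ C ≤ ENNReal.ofReal ((2 : ℝ) ^ (-(n k : ℝ) * s))} :=
  stmt2_general E
end

section
/- Let E ⊆ ℝ^d be bounded, nonempty and Borel. Then lbd E = liminf_{r→0} sup_{μ ∈ 𝒫(E)} inf_{x ∈ E} log μ(B(x,r)) / log r, and ubd E = limsup_{r→0} sup_{μ ∈ 𝒫(E)} inf_{x ∈ E} log μ(B(x,r)) / log r. -/
open MeasureTheory Metric Filter Set Topology

open ProbabilityTheory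
open scoped NNReal ENNReal

/-!
A probability measure on `E` gives mass at least `1 / N_r(E)` to one of the balls `B(x, r)` of an
optimal cover, recentred at points of `E` (pigeonhole). Conversely, the uniform measure on a maximal
`r/2`-separated subset `S ⊆ E` gives every ball `B(x, r)` with `x ∈ E` mass at most
`K / #S ≤ K / N_r(E)`, where `K` bounds the number of `r/2`-separated points in a ball of radius `r`
of `ℝ^d` (a scaling argument). So the inner supremum differs from `log N_r(E) / (-log r)` by at
most `log K / (-log r) → 0`, and such a perturbation changes neither the liminf nor the limsup.
-/

namespace Real

lemma sSup_le_sSup_of_forall_sub_mem {S T : Set ℝ} (hST : ∀ a ∈ S, ∀ ε > 0, a - ε ∈ T)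
    (hS : S.Nonempty) (hT : BddAbove T) : sSup S ≤ sSup T :=
  le_of_forall_pos_le_add fun ε hε =>
    csSup_le hS fun a ha => by linarith [le_csSup hT (hST a ha ε hε)]

lemma nonempty_and_bddAbove_of_forall_sub_mem {S T : Set ℝ}
    (hST : ∀ a ∈ S, ∀ ε > 0, a - ε ∈ T) (hTS : ∀ a ∈ T, ∀ ε > 0, a - ε ∈ S)
    (hS : S.Nonempty ∧ BddAbove S) : T.Nonempty ∧ BddAbove T := by
  obtain ⟨⟨a, ha⟩, b, hb⟩ := hS
  refine ⟨⟨a - 1, hST a ha 1 one_pos⟩, b + 1, fun t ht => ?_⟩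
  linarith [hb (hTS t ht 1 one_pos)]

/-- This covers the junk case too: then neither set is nonempty and bounded above, and both
suprema are `0`. -/
lemma sSup_eq_sSup_of_forall_sub_mem {S T : Set ℝ} (hST : ∀ a ∈ S, ∀ ε > 0, a - ε ∈ T)
    (hTS : ∀ a ∈ T, ∀ ε > 0, a - ε ∈ S) : sSup S = sSup T := by
  by_cases hS : S.Nonempty ∧ BddAbove S
  · have hT := nonempty_and_bddAbove_of_forall_sub_mem hST hTS hS
    exact le_antisymm (sSup_le_sSup_of_forall_sub_mem hST hS.1 hT.2)
      (sSup_le_sSup_of_forall_sub_mem hTS hT.1 hS.2)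
  · have hT : ¬ (T.Nonempty ∧ BddAbove T) :=
      fun hT => hS (nonempty_and_bddAbove_of_forall_sub_mem hTS hST hT)
    rw [sSup_def, sSup_def, dif_neg hS, dif_neg hT]

lemma sInf_eq_sInf_of_forall_add_mem {S T : Set ℝ} (hST : ∀ a ∈ S, ∀ ε > 0, a + ε ∈ T)
    (hTS : ∀ a ∈ T, ∀ ε > 0, a + ε ∈ S) : sInf S = sInf T := by
  rw [sInf_def, sInf_def, sSup_eq_sSup_of_forall_sub_mem]
  · intro a ha ε hε
    simpa [neg_add_eq_sub] using hST (-a) ha ε hε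
  · intro a ha ε hε
    simpa [neg_add_eq_sub] using hTS (-a) ha ε hε

end Real

section LiminfLimsup

variable {α : Type*} {l : Filter α} {f g : α → ℝ}

lemma eventually_abs_sub_lt_of_tendsto_sub (h : Tendsto (f - g) l (𝓝 0)) {ε : ℝ} (hε : 0 < ε) :
    ∀ᶠ x in l, |f x - g x| < ε := by
  simpa [Real.dist_eq] using Metric.tendsto_nhds.1 h ε hε

lemma liminf_eq_liminf_of_tendsto_sub (h : Tendsto (f - g) l (𝓝 0)) :
    liminf f l = liminf g l := by
  rw [Filter.liminf_eq, Filter.liminf_eq]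
  refine Real.sSup_eq_sSup_of_forall_sub_mem ?_ ?_ <;> intro a ha ε hε <;>
    filter_upwards [ha, eventually_abs_sub_lt_of_tendsto_sub h hε] with x hx hfg <;>
    linarith [abs_lt.1 hfg]

lemma limsup_eq_limsup_of_tendsto_sub (h : Tendsto (f - g) l (𝓝 0)) :
    limsup f l = limsup g l := by
  rw [Filter.limsup_eq, Filter.limsup_eq]
  refine Real.sInf_eq_sInf_of_forall_add_mem ?_ ?_ <;> intro a ha ε hε <;>
    filter_upwards [ha, eventually_abs_sub_lt_of_tendsto_sub h hε] with x hx hfg <;>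
    linarith [abs_lt.1 hfg]

end LiminfLimsup

section Covering

variable {X : Type*} [MetricSpace X] {E C : Set X} {r : ℝ}

lemma ediam_closedBall_le_ofReal (x : X) (r : ℝ) :
    ediam (closedBall x r) ≤ ENNReal.ofReal (2 * r) :=
  ediam_le_of_forall_dist_le fun a ha b hb => by
    linarith [dist_triangle_right a b x, mem_closedBall.1 ha, mem_closedBall.1 hb]

lemma coverNum_le_card {𝒰 : Finset (Set X)} (hd : ∀ U ∈ 𝒰, ediam U ≤ ENNReal.ofReal r)
    (hc : E ⊆ ⋃ U ∈ 𝒰, U) : coverNum E r ≤ 𝒰.card :=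
  Nat.sInf_le ⟨𝒰, rfl, hd, hc⟩

lemma exists_cover_card_eq_coverNum {𝒰 : Finset (Set X)}
    (hd : ∀ U ∈ 𝒰, ediam U ≤ ENNReal.ofReal r) (hc : E ⊆ ⋃ U ∈ 𝒰, U) :
    ∃ 𝒱 : Finset (Set X), 𝒱.card = coverNum E r ∧
      (∀ U ∈ 𝒱, ediam U ≤ ENNReal.ofReal r) ∧ E ⊆ ⋃ U ∈ 𝒱, U :=
  Nat.sInf_mem (s := {n | ∃ 𝒱 : Finset (Set X), 𝒱.card = n ∧
    (∀ U ∈ 𝒱, ediam U ≤ ENNReal.ofReal r) ∧ E ⊆ ⋃ U ∈ 𝒱, U}) ⟨𝒰.card, 𝒰, rfl, hd, hc⟩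

lemma Metric.IsCover.exists_finset_ediam_le {ε : ℝ≥0} (hC : C.Finite) (hEC : IsCover ε E C) :
    ∃ 𝒰 : Finset (Set X), 𝒰.card ≤ C.ncard ∧
      (∀ U ∈ 𝒰, ediam U ≤ ENNReal.ofReal (2 * ε)) ∧ E ⊆ ⋃ U ∈ 𝒰, U := by
  classical
  refine ⟨hC.toFinset.image (closedBall · ε), ?_, ?_, ?_⟩
  · rw [ncard_eq_toFinset_card C hC]
    exact Finset.card_image_le
  · simp only [Finset.mem_image]
    rintro _ ⟨c, -, rfl⟩
    exact ediam_closedBall_le_ofReal c ε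
  · simpa using hEC.subset_iUnion_closedBall

lemma coverNum_le_ncard_of_isCover {ε : ℝ≥0} (hC : C.Finite) (hEC : IsCover ε E C) :
    coverNum E (2 * ε) ≤ C.ncard :=
  let ⟨_, hcard, hd, hc⟩ := hEC.exists_finset_ediam_le hC
  (coverNum_le_card hd hc).trans hcard

lemma TotallyBounded.exists_finset_ediam_le (hE : TotallyBounded E) (hr : 0 < r) :
    ∃ 𝒰 : Finset (Set X), (∀ U ∈ 𝒰, ediam U ≤ ENNReal.ofReal r) ∧ E ⊆ ⋃ U ∈ 𝒰, U := by
  have hε : 2 * ((r / 2).toNNReal : ℝ) = r := by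
    rw [Real.coe_toNNReal _ (by positivity)]; ring
  obtain ⟨C, -, hC, hEC⟩ :=
    exists_finite_isCover_of_totallyBounded (Real.toNNReal_pos.2 (half_pos hr)).ne' hE
  obtain ⟨𝒰, -, hd, hc⟩ := hEC.exists_finset_ediam_le hC
  exact ⟨𝒰, by simpa only [hε] using hd, hc⟩

lemma TotallyBounded.exists_finset_card_le_coverNum (hE : TotallyBounded E) (hne : E.Nonempty)
    (hr : 0 < r) :
    ∃ T : Finset X, ↑T ⊆ E ∧ T.card ≤ coverNum E r ∧ E ⊆ ⋃ x ∈ T, closedBall x r := by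
  classical
  have : Nonempty X := hne.to_subtype.map Subtype.val
  obtain ⟨𝒰₀, hd₀, hc₀⟩ := hE.exists_finset_ediam_le hr
  obtain ⟨𝒰, hcard, hd, hc⟩ := exists_cover_card_eq_coverNum hd₀ hc₀
  have hpick : ∀ U ∈ 𝒰, (U ∩ E).Nonempty → ∃ x, x ∈ U ∩ E := fun _ _ h => h
  choose! c hc' using hpick
  refine ⟨(𝒰.filter fun U => (U ∩ E).Nonempty).image c, ?_, ?_, ?_⟩
  · simp only [Finset.coe_image, Finset.coe_filter, image_subset_iff]
    exact fun U hU => (hc' U hU.1 hU.2).2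
  · exact Finset.card_image_le.trans (hcard ▸ Finset.card_filter_le _ _)
  · intro x hx
    obtain ⟨U, hU, hxU⟩ := mem_iUnion₂.1 (hc hx)
    have hUE : (U ∩ E).Nonempty := ⟨x, hxU, hx⟩
    refine mem_iUnion₂.2 ⟨c U, Finset.mem_image_of_mem c (Finset.mem_filter.2 ⟨hU, hUE⟩), ?_⟩
    rw [mem_closedBall, ← edist_le_ofReal hr.le]
    exact (edist_le_ediam_of_mem hxU (hc' U hU hUE).1).trans (hd U hU)

lemma TotallyBounded.coverNum_pos (hE : TotallyBounded E) (hne : E.Nonempty) (hr : 0 < r) :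
    0 < coverNum E r := by
  obtain ⟨T, -, hT, hcov⟩ := hE.exists_finset_card_le_coverNum hne hr
  obtain ⟨x, hx⟩ := hne
  obtain ⟨y, hy, -⟩ := mem_iUnion₂.1 (hcov hx)
  exact (Finset.card_pos.2 ⟨y, hy⟩).trans_le hT

end Covering

lemma TotallyBounded.packingNumber_ne_top {X : Type*} [PseudoEMetricSpace X] {E : Set X}
    (hE : TotallyBounded E) {ε : ℝ≥0} (hε : ε ≠ 0) : packingNumber ε E ≠ ⊤ := by
  obtain ⟨C, -, hC, hEC⟩ := exists_finite_isCover_of_totallyBounded (half_pos hε.bot_lt).ne' hE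
  have h := packingNumber_two_mul_le_externalCoveringNumber (ε / 2) E
  rw [mul_div_cancel₀ _ two_ne_zero] at h
  exact ne_top_of_le_ne_top hC.encard_lt_top.ne (h.trans hEC.externalCoveringNumber_le_encard)

lemma exists_packingNumber_closedBall_le (X : Type*) [NormedAddCommGroup X] [NormedSpace ℝ X]
    [ProperSpace X] :
    ∃ K : ℕ, ∀ (x : X) (ε : ℝ≥0), 0 < ε → packingNumber ε (closedBall x (2 * ε)) ≤ K := by
  obtain ⟨C, -, hC, hcov⟩ :=
    exists_finite_isCover_of_isCompact (ε := 4⁻¹) (by norm_num) (isCompact_closedBall (0 : X) 1)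
  refine ⟨C.ncard, fun x ε hε => ?_⟩
  set c : ℝ := 2 * ε
  have hc : 0 < c := by positivity
  set f : X → X := fun y => x + c • y
  have hf : LipschitzWith (2 * ε) f := LipschitzWith.of_dist_le_mul fun y z => by
    simp [f, c, dist_smul₀]
  have hsurj : f.Surjective := fun y => ⟨c⁻¹ • (y - x), by simp [f, smul_smul, hc.ne']⟩
  have hpre : f ⁻¹' closedBall x c ⊆ closedBall 0 1 := fun y hy => by
    have hy' : c * ‖y‖ ≤ c * 1 := by simpa [f, norm_smul, abs_of_pos hc] using hy
    simpa using le_of_mul_le_mul_left hy' hc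
  have hcover : IsCover (ε / 2) (closedBall x c) (f '' C) := by
    have h := (hcov.anti hpre).image_lipschitz_of_surjective hf hsurj
    rwa [show 2 * ε * 4⁻¹ = ε / 2 by ring] at h
  calc packingNumber ε (closedBall x c)
      = packingNumber (2 * (ε / 2)) (closedBall x c) := by rw [mul_div_cancel₀ _ two_ne_zero]
    _ ≤ externalCoveringNumber (ε / 2) (closedBall x c) :=
        packingNumber_two_mul_le_externalCoveringNumber _ _
    _ ≤ (f '' C).encard := hcover.externalCoveringNumber_le_encard
    _ ≤ C.encard := encard_image_le f C
    _ = C.ncard := hC.cast_ncard_eq.symm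

section Measures

variable {X : Type*} [TopologicalSpace X] [MeasurableSpace X]

lemma msupport_eq_support (μ : Measure X) : msupport μ = μ.support := by
  ext x
  simp only [msupport, Measure.support_eq_forall_isOpen, mem_ofPred_eq, pos_iff_ne_zero]
  exact forall_congr' fun U => ⟨fun h hx hU => h hU hx, fun h hU hx => h hx hU⟩

lemma measure_eq_one_of_mem_probOn [HereditarilyLindelofSpace X] {E : Set X}
    (hE : MeasurableSet E) {μ : Measure X} (hμ : μ ∈ probOn E) : μ E = 1 := by
  have : IsProbabilityMeasure μ := hμ.1
  rw [← prob_compl_eq_zero_iff hE]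
  exact measure_mono_null (compl_subset_compl.2 (msupport_eq_support μ ▸ hμ.2))
    μ.measure_compl_support

lemma uniformOn_mem_probOn [T1Space X] [MeasurableSingletonClass X] {E S : Set X}
    (hS : S.Finite) (hne : S.Nonempty) (hSE : S ⊆ E) : uniformOn S ∈ probOn E := by
  refine ⟨isProbabilityMeasure_uniformOn hS hne, ?_⟩
  have hSae : S ∈ ae (uniformOn S) :=
    mem_ae_iff.2 ((uniformOn_eq_zero_iff hS).2 (inter_compl_self S))
  rw [msupport_eq_support]
  exact (Measure.support_subset_of_isClosed hS.isClosed hSae).trans hSE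

omit [TopologicalSpace X] in
lemma uniformOn_real_apply [MeasurableSingletonClass X] {S : Set X} (hS : S.Finite)
    (t : Set X) : (uniformOn S).real t = (S ∩ t).ncard / S.ncard := by
  rw [measureReal_def, uniformOn, cond_apply hS.measurableSet,
    Measure.count_apply_finite _ hS, Measure.count_apply_finite _ (hS.inter_of_left t),
    ENNReal.toReal_mul, ENNReal.toReal_inv, ENNReal.toReal_natCast, ENNReal.toReal_natCast,
    ← ncard_eq_toFinset_card _ hS, ← ncard_eq_toFinset_card _ (hS.inter_of_left t),
    inv_mul_eq_div]

end Measures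

section BallMass

variable {X : Type*} [MetricSpace X] [MeasurableSpace X] {E : Set X}

lemma TotallyBounded.exists_inv_coverNum_le_measure_closedBall (hE : TotallyBounded E)
    (hne : E.Nonempty) {r : ℝ} (hr : 0 < r) {μ : Measure X} (hμE : μ E = 1) :
    ∃ x ∈ E, (coverNum E r : ℝ≥0∞)⁻¹ ≤ μ (closedBall x r) := by
  obtain ⟨T, hTE, hTcard, hcov⟩ := hE.exists_finset_card_le_coverNum hne hr
  have hTne : T.Nonempty := by
    obtain ⟨x, hx⟩ := hne
    obtain ⟨y, hy, -⟩ := mem_iUnion₂.1 (hcov hx)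
    exact ⟨y, hy⟩
  obtain ⟨x, hxT, hmax⟩ := T.exists_max_image (fun x => μ (closedBall x r)) hTne
  have hle : 1 ≤ (coverNum E r : ℝ≥0∞) * μ (closedBall x r) := calc
    1 = μ E := hμE.symm
    _ ≤ μ (⋃ y ∈ T, closedBall y r) := measure_mono hcov
    _ ≤ ∑ y ∈ T, μ (closedBall y r) := measure_biUnion_finset_le _ _
    _ ≤ ∑ _y ∈ T, μ (closedBall x r) := Finset.sum_le_sum hmax
    _ = T.card * μ (closedBall x r) := by rw [Finset.sum_const, nsmul_eq_mul]
    _ ≤ coverNum E r * μ (closedBall x r) := by gcongr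
  have hN : (coverNum E r : ℝ≥0∞) ≠ 0 := by
    rintro h
    simp [h] at hle
  exact ⟨x, hTE hxT, (ENNReal.inv_le_iff_le_mul (fun _ => hN)
    fun h => absurd h (ENNReal.natCast_ne_top _)).2 hle⟩

end BallMass

section UniformOnSeparated

variable {X : Type*} [MetricSpace X] [MeasurableSpace X] [MeasurableSingletonClass X] {E : Set X}

/-- The witness is the uniform measure on a maximal `ε`-separated subset of `E`. -/
lemma TotallyBounded.exists_mem_probOn_measureReal_closedBall_le {K : ℕ}
    (hK : ∀ (x : X) (ε : ℝ≥0), 0 < ε → packingNumber ε (closedBall x (2 * ε)) ≤ K)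
    (hE : TotallyBounded E) (hne : E.Nonempty) {ε : ℝ≥0} (hε : 0 < ε) :
    ∃ μ ∈ probOn E, ∀ x ∈ E, 0 < μ.real (closedBall x (2 * ε)) ∧
      coverNum E (2 * ε) * μ.real (closedBall x (2 * ε)) ≤ K := by
  set S := maximalSeparatedSet ε E
  have htop := hE.packingNumber_ne_top hε.ne'
  have hS : S.Finite := encard_ne_top_iff.1 (by rwa [encard_maximalSeparatedSet htop])
  have hcover : IsCover ε E S := isCover_maximalSeparatedSet htop
  have hSpos : 0 < S.ncard := (ncard_pos hS).2 (hcover.nonempty hne)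
  have hN : coverNum E (2 * ε) ≤ S.ncard := coverNum_le_ncard_of_isCover hS hcover
  refine ⟨uniformOn S, uniformOn_mem_probOn hS (hcover.nonempty hne) maximalSeparatedSet_subset,
    fun x hx => ?_⟩
  set B := closedBall x (2 * (ε : ℝ))
  have hmeet : (S ∩ B).Nonempty := by
    obtain ⟨s, hs, hxs⟩ := mem_iUnion₂.1 (hcover.subset_iUnion_closedBall hx)
    refine ⟨s, hs, mem_closedBall_comm.1 (closedBall_subset_closedBall ?_ hxs)⟩
    linarith [ε.coe_nonneg]
  have hpack : (S ∩ B).ncard ≤ K := by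
    have h : (S ∩ B).encard ≤ packingNumber ε B :=
      (isSeparated_maximalSeparatedSet.subset inter_subset_left).encard_le_packingNumber
        inter_subset_right
    rw [← (hS.inter_of_left B).cast_ncard_eq] at h
    exact_mod_cast h.trans (hK x ε hε)
  rw [uniformOn_real_apply hS]
  have hSpos' : (0 : ℝ) < S.ncard := by exact_mod_cast hSpos
  refine ⟨div_pos (by exact_mod_cast (ncard_pos (hS.inter_of_left B)).2 hmeet) hSpos', ?_⟩
  calc (coverNum E (2 * ε) : ℝ) * ((S ∩ B).ncard / S.ncard)
      ≤ S.ncard * ((S ∩ B).ncard / S.ncard) := by gcongr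
    _ = (S ∩ B).ncard := mul_div_cancel₀ _ hSpos'.ne'
    _ ≤ K := by exact_mod_cast hpack

end UniformOnSeparated

lemma log_measureReal_div_log_nonneg {X : Type*} [MeasurableSpace X] {μ : Measure X}
    [IsProbabilityMeasure μ] {r : ℝ} (hr0 : 0 < r) (hr1 : r < 1) (s : Set X) :
    0 ≤ Real.log (μ.real s) / Real.log r :=
  div_nonneg_of_nonpos (Real.log_nonpos measureReal_nonneg measureReal_le_one)
    (Real.log_neg hr0 hr1).le

section BallExponent

variable {X : Type*} [MetricSpace X] [MeasurableSpace X]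

noncomputable def ballExponent (μ : Measure X) (E : Set X) (r : ℝ) : ℝ :=
  sInf ((fun x => Real.log (μ.real (closedBall x r)) / Real.log r) '' E)

noncomputable def supBallExponent (E : Set X) (r : ℝ) : ℝ :=
  sSup ((fun μ : Measure X => ballExponent μ E r) '' probOn E)

variable {μ : Measure X} {E : Set X} {r : ℝ}

lemma ballExponent_le [IsProbabilityMeasure μ] (hr0 : 0 < r) (hr1 : r < 1) {x : X} (hx : x ∈ E)
    {N : ℝ} (hN : 0 < N) (hμx : N⁻¹ ≤ μ.real (closedBall x r)) :
    ballExponent μ E r ≤ Real.log N / (-Real.log r) := by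
  have hlog : -Real.log N ≤ Real.log (μ.real (closedBall x r)) := by
    rw [← Real.log_inv]
    exact Real.log_le_log (inv_pos.2 hN) hμx
  have hbdd : BddBelow ((fun y => Real.log (μ.real (closedBall y r)) / Real.log r) '' E) :=
    ⟨0, forall_mem_image.2 fun _ _ => log_measureReal_div_log_nonneg hr0 hr1 _⟩
  refine (csInf_le hbdd (mem_image_of_mem _ hx)).trans ?_
  rw [div_neg, ← neg_div]
  exact div_le_div_of_nonpos_of_le (Real.log_neg hr0 hr1).le hlog

lemma le_ballExponent (hne : E.Nonempty) (hr0 : 0 < r) (hr1 : r < 1) {N K : ℝ} (hN : 0 < N)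
    (hμ : ∀ x ∈ E, 0 < μ.real (closedBall x r) ∧ N * μ.real (closedBall x r) ≤ K) :
    (Real.log N - Real.log K) / (-Real.log r) ≤ ballExponent μ E r := by
  refine le_csInf (hne.image _) (forall_mem_image.2 fun x hx => ?_)
  obtain ⟨hpos, hle⟩ := hμ x hx
  have hlog : Real.log N + Real.log (μ.real (closedBall x r)) ≤ Real.log K := by
    rw [← Real.log_mul hN.ne' hpos.ne']
    exact Real.log_le_log (by positivity) hle
  rw [← neg_div_neg_eq, neg_neg, neg_sub]
  exact div_le_div_of_nonpos_of_le (Real.log_neg hr0 hr1).le (by linarith)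

end BallExponent

section Sandwich

variable {X : Type*} [MetricSpace X] [HereditarilyLindelofSpace X] [MeasurableSpace X]
  [MeasurableSingletonClass X] {E : Set X} {K : ℕ}

lemma TotallyBounded.supBallExponent_mem_Icc
    (hK : ∀ (x : X) (ε : ℝ≥0), 0 < ε → packingNumber ε (closedBall x (2 * ε)) ≤ K)
    (hE : TotallyBounded E) (hEm : MeasurableSet E) (hne : E.Nonempty) {r : ℝ} (hr0 : 0 < r)
    (hr1 : r < 1) :
    supBallExponent E r ∈ Icc ((Real.log (coverNum E r) - Real.log K) / (-Real.log r))
      (Real.log (coverNum E r) / (-Real.log r)) := by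
  have hN : (0 : ℝ) < coverNum E r := by exact_mod_cast hE.coverNum_pos hne hr0
  have hle : ∀ μ ∈ probOn E, ballExponent μ E r ≤ Real.log (coverNum E r) / (-Real.log r) := by
    intro μ hμ
    have : IsProbabilityMeasure μ := hμ.1
    obtain ⟨x, hx, hμx⟩ := hE.exists_inv_coverNum_le_measure_closedBall hne hr0
      (measure_eq_one_of_mem_probOn hEm hμ)
    refine ballExponent_le hr0 hr1 hx hN ?_
    simpa [measureReal_def] using ENNReal.toReal_mono (measure_ne_top μ _) hμx
  have hε : 2 * ((r / 2).toNNReal : ℝ) = r := by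
    rw [Real.coe_toNNReal _ (by positivity)]; ring
  obtain ⟨μ, hμ, hμB⟩ := hE.exists_mem_probOn_measureReal_closedBall_le hK hne
    (Real.toNNReal_pos.2 (half_pos hr0))
  rw [hε] at hμB
  refine ⟨(le_ballExponent hne hr0 hr1 hN hμB).trans
      (le_csSup ⟨_, forall_mem_image.2 hle⟩ (mem_image_of_mem _ hμ)),
    csSup_le ⟨_, mem_image_of_mem _ hμ⟩ (forall_mem_image.2 hle)⟩

lemma TotallyBounded.tendsto_sub_supBallExponent
    (hK : ∀ (x : X) (ε : ℝ≥0), 0 < ε → packingNumber ε (closedBall x (2 * ε)) ≤ K)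
    (hE : TotallyBounded E) (hEm : MeasurableSet E) (hne : E.Nonempty) :
    Tendsto (fun r => Real.log (coverNum E r) / (-Real.log r) - supBallExponent E r)
      (𝓝[>] 0) (𝓝 0) := by
  have hlog : Tendsto (fun r : ℝ => Real.log K / (-Real.log r)) (𝓝[>] 0) (𝓝 0) :=
    tendsto_const_nhds.div_atTop (tendsto_neg_atBot_atTop.comp Real.tendsto_log_nhdsGT_zero)
  refine tendsto_of_tendsto_of_tendsto_of_le_of_le' tendsto_const_nhds hlog ?_ ?_ <;>
    filter_upwards [Ioo_mem_nhdsGT one_pos] with r ⟨hr0, hr1⟩ <;>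
    have h := hE.supBallExponent_mem_Icc hK hEm hne hr0 hr1
  · linarith [h.2]
  · have := h.1
    rw [sub_div] at this
    linarith

end Sandwich

theorem stmt5 {d : ℕ} (E : Set (EuclideanSpace ℝ (Fin d)))
    (hb : Bornology.IsBounded E) (hne : E.Nonempty) (hE : MeasurableSet E) :
    lbd E = liminf (fun r : ℝ => sSup ((fun μ : Measure (EuclideanSpace ℝ (Fin d)) =>
        sInf ((fun x => Real.log ((μ (closedBall x r)).toReal) / Real.log r) '' E))
        '' probOn E)) (𝓝[>] 0) ∧
    ubd E = limsup (fun r : ℝ => sSup ((fun μ : Measure (EuclideanSpace ℝ (Fin d)) =>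
        sInf ((fun x => Real.log ((μ (closedBall x r)).toReal) / Real.log r) '' E))
        '' probOn E)) (𝓝[>] 0) := by
  obtain ⟨K, hK⟩ := exists_packingNumber_closedBall_le (EuclideanSpace ℝ (Fin d))
  have hTB : TotallyBounded E := hb.isCompact_closure.totallyBounded.subset subset_closure
  have h := hTB.tendsto_sub_supBallExponent hK hE hne
  exact ⟨liminf_eq_liminf_of_tendsto_sub h, limsup_eq_limsup_of_tendsto_sub h⟩
end
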